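/- arXiv:1802.00578 — 2 statements merged into one kernel-verified Lean document; each statement's English description precedes it below -/
import Mathlib

section
/- A random variable X following the falling factorial distribution with parameter (n, θ) has the same distribution as a sum of n independent Bernoulli random variables ξ_1,...,ξ_n where ξ_j has success probability θ/(θ+j-1). -/
open MeasureTheory ProbabilityTheory Finset

noncomputable def ellFn (m : ℕ) (θ : ℝ) : ℝ := ∑ i ∈ Finset.Icc 1 m, ((i : ℝ) - 1) / (θ + i - 1) ^ 2
noncomputable def Lfn (m : ℕ) (θ : ℝ) : ℝ := ∑ i ∈ Finset.Icc 1 m, 1 / (θ + i - 1)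
noncomputable def ffPMF (n : ℕ) (θ : ℝ) (x : ℕ) : ℝ :=
  ((ascPochhammer ℕ n).coeff x : ℝ) * θ ^ x / (ascPochhammer ℝ n).eval θ

/-!
The sum `S_m = ξ_0 + ⋯ + ξ_{m-1}` satisfies, by independence of `S_m` and `ξ_m`,
`P(S_{m+1} = x + 1) = P(S_m = x + 1) · m/(θ+m) + P(S_m = x) · θ/(θ+m)`.
Multiplying the rising factorial `(θ)_m` by `θ + m` gives the same recursion for
`|s̄(m, x)| θ^x / (θ)_m`, so both laws agree by induction on `m`.
-/

open Polynomial

section FallingFactorialPMF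

lemma ascPochhammer_coeff_succ_succ (m x : ℕ) :
    (ascPochhammer ℕ (m + 1)).coeff (x + 1)
      = (ascPochhammer ℕ m).coeff x + m * (ascPochhammer ℕ m).coeff (x + 1) := by
  rw [ascPochhammer_succ_right, mul_add, coeff_add, coeff_mul_X, ← C_eq_natCast, coeff_mul_C,
    mul_comm, Nat.cast_id]

lemma ascPochhammer_coeff_succ_zero (m : ℕ) :
    (ascPochhammer ℕ (m + 1)).coeff 0 = m * (ascPochhammer ℕ m).coeff 0 := by
  rw [ascPochhammer_succ_right, mul_add, coeff_add, coeff_mul_X_zero, ← C_eq_natCast, coeff_mul_C,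
    mul_comm, zero_add, Nat.cast_id]

variable {θ : ℝ}

lemma ffPMF_zero (x : ℕ) : ffPMF 0 θ x = if x = 0 then 1 else 0 := by
  rcases x with _ | x <;> simp [ffPMF, coeff_one]

lemma ffPMF_nonneg (hθ : 0 < θ) (m x : ℕ) : 0 ≤ ffPMF m θ x :=
  div_nonneg (by positivity) (ascPochhammer_pos m θ hθ).le

lemma ffPMF_succ_zero (hθ : 0 < θ) (m : ℕ) :
    ffPMF (m + 1) θ 0 = ffPMF m θ 0 * (m / (θ + m)) := by
  have := ascPochhammer_pos m θ hθ
  have : 0 < θ + m := by positivity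
  simp only [ffPMF, ascPochhammer_succ_eval, ascPochhammer_coeff_succ_zero]
  push_cast
  field_simp

lemma ffPMF_succ_succ (hθ : 0 < θ) (m x : ℕ) :
    ffPMF (m + 1) θ (x + 1)
      = ffPMF m θ (x + 1) * (m / (θ + m)) + ffPMF m θ x * (θ / (θ + m)) := by
  have := ascPochhammer_pos m θ hθ
  have : 0 < θ + m := by positivity
  simp only [ffPMF, ascPochhammer_succ_eval, ascPochhammer_coeff_succ_succ]
  push_cast
  field_simp
  ring

end FallingFactorialPMF

section BernoulliSum

variable {Ω : Type*} [MeasurableSpace Ω] {μ : Measure Ω} {S B : Ω → ℕ}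

lemma measure_eq_zero_eq_one_sub_measure_eq_one [IsProbabilityMeasure μ] (hB : Measurable B)
    (hB01 : ∀ ω, B ω = 0 ∨ B ω = 1) : μ {ω | B ω = 0} = 1 - μ {ω | B ω = 1} := by
  have hcompl : {ω | B ω = 0} = {ω | B ω = 1}ᶜ := by
    ext ω
    rcases hB01 ω with h | h <;> simp [h]
  exact hcompl ▸ prob_compl_eq_one_sub (hB (measurableSet_singleton 1))

lemma ProbabilityTheory.IndepFun.measure_eq_inter_eq (hSB : IndepFun S B μ) (a b : ℕ) :
    μ ({ω | S ω = a} ∩ {ω | B ω = b}) = μ {ω | S ω = a} * μ {ω | B ω = b} :=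
  hSB.measure_inter_preimage_eq_mul {a} {b} (measurableSet_singleton a) (measurableSet_singleton b)

lemma ProbabilityTheory.IndepFun.measure_add_eq_zero (hSB : IndepFun S B μ) :
    μ {ω | S ω + B ω = 0} = μ {ω | S ω = 0} * μ {ω | B ω = 0} := by
  rw [← hSB.measure_eq_inter_eq]
  congr 1
  ext ω
  simp

lemma ProbabilityTheory.IndepFun.measure_add_eq_succ (hS : Measurable S) (hB : Measurable B)
    (hSB : IndepFun S B μ) (hB01 : ∀ ω, B ω = 0 ∨ B ω = 1) (x : ℕ) :
    μ {ω | S ω + B ω = x + 1}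
      = μ {ω | S ω = x + 1} * μ {ω | B ω = 0} + μ {ω | S ω = x} * μ {ω | B ω = 1} := by
  have hsplit : {ω | S ω + B ω = x + 1}
      = ({ω | S ω = x + 1} ∩ {ω | B ω = 0}) ∪ ({ω | S ω = x} ∩ {ω | B ω = 1}) := by
    ext ω
    rcases hB01 ω with h | h <;> simp [h]
  have hdisj : Disjoint ({ω | S ω = x + 1} ∩ {ω | B ω = 0}) ({ω | S ω = x} ∩ {ω | B ω = 1}) :=
    Set.disjoint_left.mpr fun ω ⟨_, h0⟩ ⟨_, h1⟩ => by simp_all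
  rw [hsplit, measure_union hdisj ((hS (measurableSet_singleton x)).inter
    (hB (measurableSet_singleton 1))), hSB.measure_eq_inter_eq, hSB.measure_eq_inter_eq]

end BernoulliSum

lemma measure_sum_bernoulli_eq_ffPMF {Ω : Type*} [MeasurableSpace Ω] (μ : Measure Ω)
    [IsProbabilityMeasure μ] {θ : ℝ} (hθ : 0 < θ) (n : ℕ) (ξ : Fin n → Ω → ℕ)
    (hξm : ∀ j, Measurable (ξ j)) (hindep : iIndepFun ξ μ)
    (hBer : ∀ j ω, ξ j ω = 0 ∨ ξ j ω = 1)
    (hp : ∀ j : Fin n, μ {ω | ξ j ω = 1} = ENNReal.ofReal (θ / (θ + (j : ℕ)))) (x : ℕ) :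
    μ {ω | ∑ j, ξ j ω = x} = ENNReal.ofReal (ffPMF n θ x) := by
  induction n generalizing x with
  | zero =>
    rcases x with _ | x <;> simp [ffPMF_zero]
  | succ n ih =>
    set S : Ω → ℕ := fun ω => ∑ j : Fin n, ξ j.castSucc ω
    set B := ξ (Fin.last n)
    have hS : Measurable S := Finset.measurable_sum _ fun j _ => hξm _
    have hlawS : ∀ x, μ {ω | S ω = x} = ENNReal.ofReal (ffPMF n θ x) :=
      ih (fun j => ξ j.castSucc) (fun j => hξm _) (hindep.precomp (Fin.castSucc_injective n))
        (fun j => hBer _) (fun j => hp _)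
    have hSB : IndepFun S B μ := by
      have := hindep.indepFun_finsetSum_of_notMem hξm
        (s := univ.map Fin.castSuccEmb) (i := Fin.last n) (by simp)
      convert this using 1
      ext ω
      simp [S]
    have hB1 : μ {ω | B ω = 1} = ENNReal.ofReal (θ / (θ + n)) := by simpa using hp (Fin.last n)
    have hB0 : μ {ω | B ω = 0} = ENNReal.ofReal (n / (θ + n)) := by
      have hsum : (n : ℝ) / (θ + n) = 1 - θ / (θ + n) := by field_simp; ring
      rw [measure_eq_zero_eq_one_sub_measure_eq_one (hξm _) (hBer _), hB1, hsum,
        ENNReal.ofReal_sub _ (by positivity), ENNReal.ofReal_one]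
    have hsplit : ∀ ω, ∑ j, ξ j ω = S ω + B ω := fun ω => Fin.sum_univ_castSucc _
    simp only [hsplit]
    have hnn := ffPMF_nonneg hθ n
    rcases x with _ | x
    · rw [hSB.measure_add_eq_zero, hlawS, hB0, ← ENNReal.ofReal_mul (hnn 0), ffPMF_succ_zero hθ]
    · rw [hSB.measure_add_eq_succ hS (hξm _) (hBer _), hlawS, hlawS, hB0, hB1,
        ← ENNReal.ofReal_mul (hnn _), ← ENNReal.ofReal_mul (hnn _), ← ENNReal.ofReal_add
          (mul_nonneg (hnn _) (by positivity)) (mul_nonneg (hnn _) (by positivity)),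
        ffPMF_succ_succ hθ]

theorem ff_bernoulli_sum_general (Ω : Type*) [MeasurableSpace Ω] (μ : Measure Ω) [IsProbabilityMeasure μ]
    (X : Ω → ℕ) (hXm : Measurable X) (n : ℕ) (θ : ℝ) (hθ : 0 < θ)
    (hX : ∀ x : ℕ, μ {ω | X ω = x} = ENNReal.ofReal (ffPMF n θ x))
    (Ω' : Type*) [MeasurableSpace Ω'] (μ' : Measure Ω') [IsProbabilityMeasure μ']
    (ξ : Fin n → Ω' → ℕ) (hξm : ∀ j, Measurable (ξ j))
    (hindep : iIndepFun ξ μ')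
    (hBer : ∀ j : Fin n, ∀ ω : Ω', ξ j ω = 0 ∨ ξ j ω = 1)
    (hp : ∀ j : Fin n, μ' {ω | ξ j ω = 1} = ENNReal.ofReal (θ / (θ + (j : ℕ)))) :
    Measure.map X μ = Measure.map (fun ω => ∑ j : Fin n, ξ j ω) μ' := by
  have hsum : Measurable fun ω => ∑ j : Fin n, ξ j ω := Finset.measurable_sum _ fun j _ => hξm j
  refine Measure.ext_of_singleton fun x => ?_
  rw [Measure.map_apply hXm (measurableSet_singleton x),
    Measure.map_apply hsum (measurableSet_singleton x)]
  exact (hX x).trans (measure_sum_bernoulli_eq_ffPMF μ' hθ n ξ hξm hindep hBer hp x).symm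

theorem ff_bernoulli_sum (Ω : Type*) [MeasurableSpace Ω] (μ : Measure Ω) [IsProbabilityMeasure μ]
    (X : Ω → ℕ) (hXm : Measurable X) (n : ℕ) (θ : ℝ) (hn : 1 ≤ n) (hθ : 0 < θ)
    (hX : ∀ x : ℕ, μ {ω | X ω = x} = ENNReal.ofReal (ffPMF n θ x))
    (Ω' : Type*) [MeasurableSpace Ω'] (μ' : Measure Ω') [IsProbabilityMeasure μ']
    (ξ : Fin n → Ω' → ℕ) (hξm : ∀ j, Measurable (ξ j))
    (hindep : iIndepFun ξ μ')
    (hBer : ∀ j : Fin n, ∀ ω : Ω', ξ j ω = 0 ∨ ξ j ω = 1)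
    (hp : ∀ j : Fin n, μ' {ω | ξ j ω = 1} = ENNReal.ofReal (θ / (θ + (j : ℕ)))) :
    Measure.map X μ = Measure.map (fun ω => ∑ j : Fin n, ξ j ω) μ' :=
  ff_bernoulli_sum_general Ω μ X hXm n θ hθ hX Ω' μ' ξ hξm hindep hBer hp
end

section
/- Let n ≥ 1 and s ≥ 2 be integers and θ real with θ > √((n−1)(ns+n−1)). Then s·ℓ_n(θ) < ℓ_{ns}(θ). -/
open MeasureTheory ProbabilityTheory Finset

/-!
Write `ℓ_m(θ) = ∑_{k < m} f k` with `f x = x / (θ + x)²`, and cut the range `k < n s` into the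
`s` blocks `j n + i` (`i < n`). Cross-multiplying, `f x < f y` amounts to
`(y - x) (θ² - x y) > 0`, so `f i < f (j n + i)` as soon as `i (j n + i) < θ²`; since
`i (j n + i) ≤ (n - 1)(n s - 1) < θ²`, every block `j ≥ 1` beats the block `j = 0`,
which is `ℓ_n(θ)`.
-/

lemma div_add_sq_lt_div_add_sq {θ x y : ℝ} (hθ : 0 < θ) (hx : 0 ≤ x) (hxy : x < y)
    (hxyθ : x * y < θ ^ 2) : x / (θ + x) ^ 2 < y / (θ + y) ^ 2 := by
  rw [div_lt_div_iff₀ (by positivity) (by nlinarith)]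
  nlinarith [mul_pos (sub_pos.mpr hxy) (sub_pos.mpr hxyθ)]

lemma ellFn_eq_sum_range (m : ℕ) (θ : ℝ) :
    ellFn m θ = ∑ k ∈ range m, (k : ℝ) / (θ + k) ^ 2 := by
  rw [ellFn, ← Ico_add_one_right_eq_Icc, sum_Ico_eq_sum_range]
  refine sum_congr rfl fun k _ => ?_
  push_cast
  ring_nf

lemma sum_range_mul_eq_sum_sum {M : Type*} [AddCommMonoid M] (g : ℕ → M) (n s : ℕ) :
    ∑ k ∈ range (n * s), g k = ∑ j ∈ range s, ∑ i ∈ range n, g (j * n + i) := by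
  induction s with
  | zero => simp
  | succ s ih => rw [Nat.mul_succ, sum_range_add, ih, sum_range_succ, Nat.mul_comm]

lemma div_add_sq_lt_of_mem_block {n s i j : ℕ} {θ : ℝ} (hθ : 0 < θ)
    (hθns : ((n : ℝ) - 1) * (n * s - 1) < θ ^ 2) (hi : i < n) (hj : 1 ≤ j) (hjs : j < s) :
    (i : ℝ) / (θ + i) ^ 2 < ((j * n + i : ℕ) : ℝ) / (θ + (j * n + i : ℕ)) ^ 2 := by
  have hiR : (i : ℝ) + 1 ≤ n := by exact_mod_cast hi
  have hjR : (1 : ℝ) ≤ j := by exact_mod_cast hj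
  have hjsR : (j : ℝ) + 1 ≤ s := by exact_mod_cast hjs
  have hblock : (j : ℝ) * n + i ≤ n * s - 1 := by nlinarith
  push_cast
  refine div_add_sq_lt_div_add_sq hθ (Nat.cast_nonneg i) (by nlinarith) ?_
  calc (i : ℝ) * (j * n + i) ≤ (n - 1) * (n * s - 1) :=
        mul_le_mul (by linarith) hblock (by positivity) (by linarith)
    _ < θ ^ 2 := hθns

theorem natCast_mul_ellFn_lt_ellFn_mul {n s : ℕ} {θ : ℝ} (hn : 1 ≤ n) (hs : 2 ≤ s) (hθ : 0 < θ)
    (hθns : ((n : ℝ) - 1) * (n * s - 1) < θ ^ 2) : s * ellFn n θ < ellFn (n * s) θ := by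
  rw [ellFn_eq_sum_range, ellFn_eq_sum_range, sum_range_mul_eq_sum_sum, ← nsmul_eq_mul]
  nth_rw 1 [← card_range s]
  rw [← sum_const]
  apply sum_lt_sum
  · intro j hj
    rcases Nat.eq_zero_or_pos j with rfl | hj0
    · simp
    · exact sum_le_sum fun i hi =>
        (div_add_sq_lt_of_mem_block hθ hθns (mem_range.mp hi) hj0 (mem_range.mp hj)).le
  · refine ⟨1, mem_range.mpr (by omega), sum_lt_sum_of_nonempty (nonempty_range_iff.mpr (by omega))
      fun i hi => div_add_sq_lt_of_mem_block hθ hθns (mem_range.mp hi) le_rfl (by omega)⟩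

theorem th1 (n s : ℕ) (hn : 1 ≤ n) (hs : 2 ≤ s) (θ : ℝ)
    (hθ : θ > Real.sqrt (((n : ℝ) - 1) * ((n : ℝ) * s + n - 1))) :
    s * ellFn n θ < ellFn (n * s) θ := by
  have hθ0 : 0 < θ := (Real.sqrt_nonneg _).trans_lt hθ
  have hθsq := (Real.sqrt_lt' hθ0).mp hθ
  have hn1 : (1 : ℝ) ≤ n := by exact_mod_cast hn
  refine natCast_mul_ellFn_lt_ellFn_mul hn hs hθ0 (lt_of_le_of_lt ?_ hθsq)
  exact mul_le_mul_of_nonneg_left (by linarith) (by linarith)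
end
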